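/- arXiv:2412.10800 — 2 statements merged into one kernel-verified Lean document; each statement's English description precedes it below -/
import Mathlib

section
/- Let N ≥ 2 and let D^N be the (N-1)×(N-1) tridiagonal matrix with -2 on the diagonal and 1 on the sub- and superdiagonals. If v ∈ ℝ^{N-1} satisfies v_n ∈ [a,b] for all n, with a ≤ 0 ≤ b, then every component of exp(t N² D^N) v lies in [a,b] for every t ≥ 0. -/
/-!
Write `A = t N² Dᴺ`: its off-diagonal entries are nonnegative and its row sums are nonpositive.
With `c` large, `B = A + c` is entrywise nonnegative with row sums at most `c`, so
`exp A = e⁻ᶜ exp B` has nonnegative entries (every term of the exponential series of `B` does)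
and row sums at most `e⁻ᶜ ‖exp B‖∞ ≤ e⁻ᶜ e^‖B‖∞ ≤ 1`. A nonnegative matrix with row sums at most
`1` maps `[a,b]ⁿ` into itself as soon as `a ≤ 0 ≤ b`.
-/

open NormedSpace

theorem norm_exp_le_exp_norm {𝔸 : Type*} [NormedRing 𝔸] [NormOneClass 𝔸] [NormedAlgebra ℝ 𝔸]
    [CompleteSpace 𝔸] (x : 𝔸) : ‖exp x‖ ≤ Real.exp ‖x‖ := by
  rw [← (exp_series_hasSum_exp' (𝕂 := ℝ) x).tsum_eq, Real.exp_eq_exp_ℝ]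
  refine tsum_of_norm_bounded (expSeries_div_hasSum_exp ‖x‖) fun n => ?_
  rw [norm_smul, norm_inv, RCLike.norm_natCast, div_eq_inv_mul]
  exact mul_le_mul_of_nonneg_left (norm_pow_le x n) (by positivity)

theorem Fin.card_filter_intCast_eq_le_one (n : ℕ) (c : ℤ) :
    (Finset.univ.filter fun j : Fin n => (j : ℤ) = c).card ≤ 1 :=
  Finset.card_le_one.mpr fun x hx y hy => by
    simp only [Finset.mem_filter, Finset.mem_univ, true_and] at hx hy
    exact Fin.ext (by omega)

namespace Matrix

theorem mulVec_apply_mem_Icc {l m R : Type*} [Fintype m] [Ring R] [LinearOrder R]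
    [IsOrderedRing R] {P : Matrix l m R} (hP : ∀ i j, 0 ≤ P i j) (hrow : ∀ i, ∑ j, P i j ≤ 1)
    {a b : R} (ha : a ≤ 0) (hb : 0 ≤ b) {v : m → R} (hv : ∀ j, v j ∈ Set.Icc a b) (i : l) :
    (P *ᵥ v) i ∈ Set.Icc a b := by
  have hsum_a : (∑ j, P i j) * a ≤ (P *ᵥ v) i := by
    rw [Finset.sum_mul]
    exact Finset.sum_le_sum fun j _ => mul_le_mul_of_nonneg_left (hv j).1 (hP i j)
  have hsum_b : (P *ᵥ v) i ≤ (∑ j, P i j) * b := by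
    rw [Finset.sum_mul]
    exact Finset.sum_le_sum fun j _ => mul_le_mul_of_nonneg_left (hv j).2 (hP i j)
  exact ⟨(le_mul_of_le_one_left ha (hrow i)).trans hsum_a,
    hsum_b.trans (mul_le_of_le_one_left hb (hrow i))⟩

variable {m : Type*}

theorem neg_apply_self_le_sum_abs_diag [Fintype m] (A : Matrix m m ℝ) (k : m) :
    -A k k ≤ ∑ i, |A i i| :=
  (neg_le_abs _).trans (Finset.single_le_sum (fun i _ => abs_nonneg (A i i)) (Finset.mem_univ k))

theorem add_smul_one_apply_nonneg [DecidableEq m] {A : Matrix m m ℝ}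
    (hA : ∀ i j, i ≠ j → 0 ≤ A i j) {c : ℝ} (hc : ∀ i, -A i i ≤ c) (i j : m) :
    0 ≤ (A + c • 1) i j := by
  rcases eq_or_ne i j with rfl | hij
  · simp only [add_apply, smul_apply, one_apply_eq, smul_eq_mul, mul_one]
    linarith [hc i]
  · simpa [one_apply_ne hij] using hA i j hij

variable [Fintype m] [DecidableEq m]

open scoped Norms.Operator in
theorem exp_apply_nonneg {B : Matrix m m ℝ} (hB : ∀ i j, 0 ≤ B i j) (i j : m) :
    0 ≤ exp B i j :=
  (Pi.hasSum.mp (Pi.hasSum.mp (exp_series_hasSum_exp' (𝕂 := ℝ) B) i) j).nonneg fun n =>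
    mul_nonneg (by positivity) (pow_apply_nonneg hB n i j)

open scoped Norms.Operator in
theorem sum_abs_exp_apply_le {A : Matrix m m ℝ} {r : ℝ} (hA : ∀ i, ∑ j, |A i j| ≤ r) (i : m) :
    ∑ j, |exp A i j| ≤ Real.exp r := by
  have : Nonempty m := ⟨i⟩
  have hr : 0 ≤ r := (Finset.sum_nonneg fun j _ => abs_nonneg (A i j)).trans (hA i)
  have hnorm : ‖A‖ ≤ r := by
    rw [linfty_opNorm_def, ← NNReal.coe_mk r hr, NNReal.coe_le_coe]
    refine Finset.sup_le fun k _ => ?_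
    rw [← NNReal.coe_le_coe, NNReal.coe_sum]
    simpa using hA k
  calc ∑ j, |exp A i j| ≤ ‖exp A‖ := by
        have := Finset.le_sup (f := fun k => ∑ j, ‖exp A k j‖₊) (Finset.mem_univ i)
        rw [← NNReal.coe_le_coe, NNReal.coe_sum] at this
        simpa [linfty_opNorm_def] using this
    _ ≤ Real.exp ‖A‖ := norm_exp_le_exp_norm A
    _ ≤ Real.exp r := Real.exp_le_exp.mpr hnorm

theorem exp_smul_one (c : ℝ) : exp (c • (1 : Matrix m m ℝ)) = Real.exp c • 1 := by
  rw [smul_one_eq_diagonal, exp_diagonal, smul_one_eq_diagonal, Pi.exp_def, Real.exp_eq_exp_ℝ]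

theorem exp_eq_real_exp_neg_smul_exp_add_smul_one (A : Matrix m m ℝ) (c : ℝ) :
    exp A = Real.exp (-c) • exp (A + c • 1) := by
  rw [← one_mul (exp (A + c • 1)), ← smul_mul_assoc, ← exp_smul_one,
    ← exp_add_of_commute _ _ ((Commute.one_left _).smul_left _), neg_smul, add_comm A,
    neg_add_cancel_left]

theorem exp_apply_nonneg_of_offDiag_nonneg {A : Matrix m m ℝ} (hA : ∀ i j, i ≠ j → 0 ≤ A i j)
    (i j : m) : 0 ≤ exp A i j := by
  rw [exp_eq_real_exp_neg_smul_exp_add_smul_one A (∑ k, |A k k|), smul_apply, smul_eq_mul]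
  exact mul_nonneg (Real.exp_nonneg _) <|
    exp_apply_nonneg (add_smul_one_apply_nonneg hA (neg_apply_self_le_sum_abs_diag A)) i j

theorem sum_exp_apply_le_one {A : Matrix m m ℝ} (hA : ∀ i j, i ≠ j → 0 ≤ A i j)
    (hrow : ∀ i, ∑ j, A i j ≤ 0) (i : m) : ∑ j, exp A i j ≤ 1 := by
  set c := ∑ k, |A k k|
  have hB : ∀ k j, 0 ≤ (A + c • 1) k j :=
    add_smul_one_apply_nonneg hA (neg_apply_self_le_sum_abs_diag A)
  have hBrow (k : m) : ∑ j, |(A + c • 1) k j| ≤ c :=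
    calc ∑ j, |(A + c • 1) k j| = ∑ j, A k j + c := by
          simp_rw [abs_of_nonneg (hB k _)]
          simp [Finset.sum_add_distrib, one_apply]
      _ ≤ c := by linarith [hrow k]
  calc ∑ j, exp A i j = Real.exp (-c) * ∑ j, |exp (A + c • 1) i j| := by
        simp_rw [abs_of_nonneg (exp_apply_nonneg hB i _)]
        rw [exp_eq_real_exp_neg_smul_exp_add_smul_one A c, Finset.mul_sum]
        simp only [smul_apply, smul_eq_mul]
    _ ≤ Real.exp (-c) * Real.exp c :=
        mul_le_mul_of_nonneg_left (sum_abs_exp_apply_le hBrow i) (Real.exp_nonneg _)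
    _ = 1 := by rw [← Real.exp_add, neg_add_cancel, Real.exp_zero]

end Matrix

open Matrix

def dirichletLaplacian (n : ℕ) : Matrix (Fin n) (Fin n) ℝ :=
  of fun i j => if i = j then -2
    else if (i : ℤ) - (j : ℤ) = 1 ∨ (j : ℤ) - (i : ℤ) = 1 then 1 else 0

theorem dirichletLaplacian_apply_nonneg_of_ne {n : ℕ} {i j : Fin n} (h : i ≠ j) :
    0 ≤ dirichletLaplacian n i j := by
  simp only [dirichletLaplacian, of_apply, if_neg h]
  split_ifs <;> norm_num

theorem sum_dirichletLaplacian_apply_nonpos {n : ℕ} (i : Fin n) :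
    ∑ j, dirichletLaplacian n i j ≤ 0 := by
  have hle (j : Fin n) : dirichletLaplacian n i j ≤
      -2 * (if i = j then 1 else 0) + (if (j : ℤ) = i + 1 then 1 else 0) +
        (if (j : ℤ) = i - 1 then 1 else 0) := by
    simp only [dirichletLaplacian, of_apply]
    split_ifs <;> first | omega | norm_num
  have hcard (c : ℤ) : ∑ j : Fin n, (if (j : ℤ) = c then (1 : ℝ) else 0) ≤ 1 := by
    rw [Finset.sum_boole]
    exact_mod_cast Fin.card_filter_intCast_eq_le_one n c
  calc ∑ j, dirichletLaplacian n i j ≤ ∑ j : Fin n, (-2 * (if i = j then 1 else 0) +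
        (if (j : ℤ) = i + 1 then 1 else 0) + (if (j : ℤ) = i - 1 then 1 else 0)) :=
        Finset.sum_le_sum fun j _ => hle j
    _ ≤ 0 := by
        rw [Finset.sum_add_distrib, Finset.sum_add_distrib, ← Finset.mul_sum,
          Finset.sum_ite_eq Finset.univ i, if_pos (Finset.mem_univ i)]
        linarith [hcard (i + 1), hcard (i - 1)]

theorem matrix_exp_heat_preserves_Icc_general (N : ℕ) (a b : ℝ)
    (ha : a ≤ 0) (hb : 0 ≤ b)
    (D : Matrix (Fin (N - 1)) (Fin (N - 1)) ℝ)
    (hD : ∀ i j : Fin (N - 1), D i j =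
      if i = j then -2
      else if (i : ℤ) - (j : ℤ) = 1 ∨ (j : ℤ) - (i : ℤ) = 1 then 1 else 0)
    (v : Fin (N - 1) → ℝ) (hv : ∀ n, v n ∈ Set.Icc a b)
    (t : ℝ) (ht : 0 ≤ t) :
    ∀ n, (NormedSpace.exp ((t * (N : ℝ) ^ 2) • D)).mulVec v n ∈ Set.Icc a b := by
  obtain rfl : D = dirichletLaplacian (N - 1) := Matrix.ext hD
  have hs : 0 ≤ t * (N : ℝ) ^ 2 := by positivity
  have hoff (i j : Fin (N - 1)) (h : i ≠ j) :
      0 ≤ ((t * (N : ℝ) ^ 2) • dirichletLaplacian (N - 1)) i j :=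
    mul_nonneg hs (dirichletLaplacian_apply_nonneg_of_ne h)
  have hrow (i : Fin (N - 1)) : ∑ j, ((t * (N : ℝ) ^ 2) • dirichletLaplacian (N - 1)) i j ≤ 0 := by
    simp only [Matrix.smul_apply, smul_eq_mul, ← Finset.mul_sum]
    exact mul_nonpos_of_nonneg_of_nonpos hs (sum_dirichletLaplacian_apply_nonpos i)
  exact mulVec_apply_mem_Icc (exp_apply_nonneg_of_offDiag_nonneg hoff)
    (sum_exp_apply_le_one hoff hrow) ha hb hv

/-- The discrete heat semigroup `exp(t N² Dᴺ)` preserves the interval `[a,b]`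
componentwise, where `Dᴺ` is the finite-difference Dirichlet Laplacian matrix. -/
theorem matrix_exp_heat_preserves_Icc (N : ℕ) (hN : 2 ≤ N) (a b : ℝ)
    (ha : a ≤ 0) (hb : 0 ≤ b)
    (D : Matrix (Fin (N - 1)) (Fin (N - 1)) ℝ)
    (hD : ∀ i j : Fin (N - 1), D i j =
      if i = j then -2
      else if (i : ℤ) - (j : ℤ) = 1 ∨ (j : ℤ) - (i : ℤ) = 1 then 1 else 0)
    (v : Fin (N - 1) → ℝ) (hv : ∀ n, v n ∈ Set.Icc a b)
    (t : ℝ) (ht : 0 ≤ t) :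
    ∀ n, (NormedSpace.exp ((t * (N : ℝ) ^ 2) • D)).mulVec v n ∈ Set.Icc a b :=
  matrix_exp_heat_preserves_Icc_general N a b ha hb D hD v hv t ht
end

section
/- Let a < b be real numbers, and g : [a,b] → ℝ be continuous, strictly positive on (a,b), with ∫_{r₀}^{a} g(w)^{-1} dw = -∞ and ∫_{r₀}^{b} g(w)^{-1} dw = +∞ for some (equivalently all) r₀ ∈ (a,b). Then the Lamperti transform Φ(r) = ∫_{r₀}^r g(w)^{-1} dw defines a strictly increasing bijection from (a,b) onto ℝ, and its inverse Φ⁻¹ : ℝ → (a,b) is continuously differentiable with (Φ⁻¹)'(r) = g(Φ⁻¹(r)); in particular Φ⁻¹ is bounded with bounded derivative. -/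
open Filter in
/-- Properties of the Lamperti transform `Φ(r) = ∫_{r₀}^r 1/g` and of its inverse,
under strict positivity of `g` on `(a,b)`, continuity of `g` on `[a,b]`, and
divergence of the integral of `1/g` near both endpoints. -/
theorem lamperti_transform_bijective_inverse (a b r₀ : ℝ) (hab : a < b)
    (g : ℝ → ℝ) (hg : ContinuousOn g (Set.Icc a b))
    (hgpos : ∀ w ∈ Set.Ioo a b, 0 < g w)
    (hr₀ : r₀ ∈ Set.Ioo a b)
    (hdiva : Tendsto (fun x => ∫ w in r₀..x, (g w)⁻¹) (nhdsWithin a (Set.Ioi a)) atBot)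
    (hdivb : Tendsto (fun x => ∫ w in r₀..x, (g w)⁻¹) (nhdsWithin b (Set.Iio b)) atTop) :
    StrictMonoOn (fun r => ∫ w in r₀..r, (g w)⁻¹) (Set.Ioo a b) ∧
    Set.BijOn (fun r => ∫ w in r₀..r, (g w)⁻¹) (Set.Ioo a b) Set.univ ∧
    ∃ Ψ : ℝ → ℝ,
      (∀ y, Ψ y ∈ Set.Ioo a b) ∧
      (∀ r ∈ Set.Ioo a b, Ψ (∫ w in r₀..r, (g w)⁻¹) = r) ∧
      (∀ y, (∫ w in r₀..(Ψ y), (g w)⁻¹) = y) ∧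
      (∀ y, HasDerivAt Ψ (g (Ψ y)) y) ∧
      Continuous (fun y => g (Ψ y)) ∧
      (∃ C, ∀ y, |Ψ y| ≤ C) ∧ (∃ C, ∀ y, |g (Ψ y)| ≤ C) := by
  set Φ : ℝ → ℝ := fun r => ∫ w in r₀..r, (g w)⁻¹ with hΦdef
  have hopen : IsOpen (Set.Ioo a b) := isOpen_Ioo
  have hginv_cont : ContinuousOn (fun w => (g w)⁻¹) (Set.Ioo a b) :=
    (hg.mono Set.Ioo_subset_Icc_self).inv₀ fun w hw => (hgpos w hw).ne'
  have hderiv : ∀ r ∈ Set.Ioo a b, HasDerivAt Φ ((g r)⁻¹) r := by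
    intro r hr
    apply intervalIntegral.integral_hasDerivAt_right
    · exact (hginv_cont.mono (Set.ordConnected_Ioo.uIcc_subset hr₀ hr)).intervalIntegrable
    · exact hginv_cont.stronglyMeasurableAtFilter hopen r hr
    · exact hginv_cont.continuousAt (hopen.mem_nhds hr)
  have hΦcont : ContinuousOn Φ (Set.Ioo a b) := fun r hr =>
    ((hderiv r hr).continuousAt).continuousWithinAt
  have hmono : StrictMonoOn Φ (Set.Ioo a b) := by
    apply strictMonoOn_of_deriv_pos (convex_Ioo a b) hΦcont
    intro r hr
    rw [interior_Ioo] at hr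
    rw [(hderiv r hr).deriv]
    exact inv_pos.mpr (hgpos r hr)
  have hsurj : ∀ y : ℝ, ∃ r ∈ Set.Ioo a b, Φ r = y := by
    intro y
    have hmem_a : Set.Ioo a b ∈ nhdsWithin a (Set.Ioi a) := by
      rw [← Set.Ioi_inter_Iio]
      exact inter_mem_nhdsWithin _ (Iio_mem_nhds hab)
    have hmem_b : Set.Ioo a b ∈ nhdsWithin b (Set.Iio b) := by
      rw [← Set.Ioi_inter_Iio]
      exact Filter.inter_mem (mem_nhdsWithin_of_mem_nhds (Ioi_mem_nhds hab))
        self_mem_nhdsWithin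
    obtain ⟨x, hxy, hx⟩ :=
      ((hdiva.eventually (eventually_lt_atBot y)).and
        (eventually_of_mem hmem_a fun x hx => hx)).exists
    obtain ⟨z, hzy, hz⟩ :=
      ((hdivb.eventually (eventually_gt_atTop y)).and
        (eventually_of_mem hmem_b fun x hx => hx)).exists
    have hxz : x < z := (hmono.lt_iff_lt hx hz).mp (hxy.trans hzy)
    have hsub : Set.Icc x z ⊆ Set.Ioo a b := Set.Icc_subset_Ioo hx.1 hz.2
    obtain ⟨r, hr, hΦr⟩ := intermediate_value_Icc hxz.le (hΦcont.mono hsub)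
      (Set.mem_Icc.mpr ⟨hxy.le, hzy.le⟩)
    exact ⟨r, hsub hr, hΦr⟩
  -- build the inverse via an order isomorphism
  let f : Set.Ioo a b → ℝ := fun r => Φ r
  have hf_mono : StrictMono f := fun u v huv => hmono u.2 v.2 huv
  have hf_surj : Function.Surjective f := fun y => by
    obtain ⟨r, hr, hry⟩ := hsurj y; exact ⟨⟨r, hr⟩, hry⟩
  let e := StrictMono.orderIsoOfSurjective f hf_mono hf_surj
  let Ψ : ℝ → ℝ := fun y => (e.symm y : ℝ)
  have hΨmem : ∀ y, Ψ y ∈ Set.Ioo a b := fun y => (e.symm y).2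
  have he_apply : ∀ u : Set.Ioo a b, e u = f u := fun u => by
    rw [StrictMono.coe_orderIsoOfSurjective]
  have hright : ∀ y, Φ (Ψ y) = y := fun y => by
    have := e.apply_symm_apply y
    rw [he_apply] at this
    exact this
  have hleft : ∀ r ∈ Set.Ioo a b, Ψ (Φ r) = r := by
    intro r hr
    have : e ⟨r, hr⟩ = Φ r := he_apply ⟨r, hr⟩
    show ((e.symm (Φ r) : Set.Ioo a b) : ℝ) = r
    rw [← this, e.symm_apply_apply]
  have hΨcont : Continuous Ψ := continuous_subtype_val.comp e.symm.continuous
  have hΨderiv : ∀ y, HasDerivAt Ψ (g (Ψ y)) y := by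
    intro y
    have h1 : HasDerivAt Φ ((g (Ψ y))⁻¹) (Ψ y) := hderiv _ (hΨmem y)
    have h2 : (g (Ψ y))⁻¹ ≠ 0 := inv_ne_zero (hgpos _ (hΨmem y)).ne'
    have := HasDerivAt.of_local_left_inverse hΨcont.continuousAt h1 h2
      (Filter.Eventually.of_forall hright)
    simpa using this
  have hgΨcont : Continuous fun y => g (Ψ y) := by
    rw [continuous_iff_continuousAt]
    intro y
    exact (hg.continuousAt (Icc_mem_nhds (hΨmem y).1 (hΨmem y).2)).comp hΨcont.continuousAt
  refine ⟨hmono, ⟨fun _ _ => trivial, hmono.injOn, fun y _ => hsurj y⟩, Ψ, hΨmem, hleft,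
    hright, hΨderiv, hgΨcont, ⟨max |a| |b|, fun y => ?_⟩, ?_⟩
  · rcases hΨmem y with ⟨h1, h2⟩
    rw [abs_le]
    constructor
    · calc -(max |a| |b|) ≤ -|a| := by simp [le_max_left]
        _ ≤ a := neg_abs_le a
        _ ≤ Ψ y := h1.le
    · exact h2.le.trans ((le_abs_self b).trans (le_max_right _ _))
  · obtain ⟨C, hC⟩ := isCompact_Icc.exists_bound_of_continuousOn hg
    exact ⟨C, fun y => hC _ (Set.Ioo_subset_Icc_self (hΨmem y))⟩
end
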